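/- Let G = (V, E) be a finite simple graph, let w assign a strictly positive real weight to every edge of G, let k be a natural number with 2 ≤ k ≤ |V|, and let C be the collection of edge sets F ⊆ E such that the graph obtained from G by deleting the edges in F has exactly k connected components (the k-cuts of G). Assume C is nonempty and let y ∈ C be a minimum k-cut, i.e. ∑_{e ∈ y} w(e) ≤ ∑_{e ∈ y'} w(e) for every y' ∈ C. Let α ∈ ℝ be arbitrary. Then for every sequence of score vectors sₙ : E → ℝ such that sₙ(e) → +∞ for every e ∈ y and sₙ(e) → −∞ for every e ∉ y, there exists N such that for all n ≥ N: every k-cut y' ∈ C satisfying ∑_{e ∈ y'} w(e)·(1 − σ(sₙ(e))) ≤ α · ∑_{e ∈ y} w(e)·(1 − σ(sₙ(e))) must equal y. (This instantiates Theorem 2 for the minimum k-cut problem with modified edge weights w(e)·(1 − σ(s(e))).) -/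

import Mathlib

open Filter Finset Topology

/-- The logistic sigmoid function `σ(x) = exp x / (1 + exp x)`. -/
noncomputable def sigmoid (x : ℝ) : ℝ := Real.exp x / (1 + Real.exp x)

/-- The collection of `k`-cuts of a simple graph `G`: sets of edges of `G` whose
removal leaves exactly `k` connected components. -/
def kCuts {V : Type*} [Fintype V] [DecidableEq V] (G : SimpleGraph V) (k : ℕ) :
    Set (Finset (Sym2 V)) :=
  {F | ↑F ⊆ G.edgeSet ∧ Nat.card (G.deleteEdges ↑F).ConnectedComponent = k}

lemma sigmoid_lt_one (x : ℝ) : sigmoid x < 1 := by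
  unfold sigmoid
  rw [div_lt_one (by positivity)]
  linarith

lemma sigmoid_tendsto_atTop : Tendsto sigmoid atTop (𝓝 1) := by
  have h : sigmoid = fun x => 1 - (1 + Real.exp x)⁻¹ := by
    funext x
    have hp : (0:ℝ) < 1 + Real.exp x := by positivity
    rw [sigmoid, eq_sub_iff_add_eq, ← one_div, ← add_div, add_comm (Real.exp x) 1, div_self hp.ne']
  rw [h]
  have h2 : Tendsto (fun x : ℝ => (1 + Real.exp x)⁻¹) atTop (𝓝 0) :=
    tendsto_inv_atTop_zero.comp (tendsto_atTop_add_const_left _ 1 Real.tendsto_exp_atTop)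
  simpa using tendsto_const_nhds.sub h2

lemma sigmoid_tendsto_atBot : Tendsto sigmoid atBot (𝓝 0) := by
  have := Tendsto.div Real.tendsto_exp_atBot
    (tendsto_const_nhds.add Real.tendsto_exp_atBot) (by norm_num : (1:ℝ) + 0 ≠ 0)
  rw [add_zero, zero_div] at this
  exact this

/-- **Theorem 2 instantiated for minimum `k`-cut.** Let `G` be a finite simple graph
with strictly positive edge weights `w`, let `2 ≤ k ≤ |V|`, let `y` be a minimum
`k`-cut, and let `α ∈ ℝ` be arbitrary. If the scores `sₙ(e) → +∞` for `e ∈ y` and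
`sₙ(e) → −∞` for `e ∉ y`, then eventually every `k`-cut `y'` whose modified weight
`∑_{e ∈ y'} w e * (1 − σ(sₙ e))` satisfies the relative error bound with factor `α`
(relative to the modified weight of `y`) must equal `y`. -/
theorem min_k_cut_eventually_optimal
    {V : Type*} [Fintype V] [DecidableEq V]
    (G : SimpleGraph V)
    (w : Sym2 V → ℝ) (hw : ∀ e ∈ G.edgeSet, 0 < w e)
    (k : ℕ) (hk : 2 ≤ k) (hk' : k ≤ Fintype.card V)
    (hC : (kCuts G k).Nonempty)
    (y : Finset (Sym2 V)) (hy : y ∈ kCuts G k)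
    (hopt : ∀ y' ∈ kCuts G k, ∑ e ∈ y, w e ≤ ∑ e ∈ y', w e)
    (α : ℝ)
    (s : ℕ → Sym2 V → ℝ)
    (hyTop : ∀ e ∈ y, Tendsto (fun n => s n e) atTop atTop)
    (hyBot : ∀ e ∈ G.edgeSet, e ∉ y → Tendsto (fun n => s n e) atTop atBot) :
    ∃ N : ℕ, ∀ n ≥ N, ∀ y' ∈ kCuts G k,
      (∑ e ∈ y', w e * (1 - sigmoid (s n e))) ≤
          α * ∑ e ∈ y, w e * (1 - sigmoid (s n e)) →
        y' = y := by
  classical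
  set f : ℕ → Sym2 V → ℝ := fun n e => w e * (1 - sigmoid (s n e)) with hf
  have hposf : ∀ (n : ℕ), ∀ e ∈ G.edgeSet, 0 < f n e := fun n e he =>
    mul_pos (hw e he) (by linarith [sigmoid_lt_one (s n e)])
  have hsum0 : Tendsto (fun n => α * ∑ e ∈ y, f n e) atTop (𝓝 0) := by
    have hterm : ∀ e ∈ y, Tendsto (fun n => f n e) atTop (𝓝 0) := by
      intro e he
      have h1 : Tendsto (fun n => sigmoid (s n e)) atTop (𝓝 1) :=
        sigmoid_tendsto_atTop.comp (hyTop e he)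
      have := ((tendsto_const_nhds (x := (1:ℝ))).sub h1).const_mul (w e)
      simpa [hf] using this
    have hs : Tendsto (fun n => ∑ e ∈ y, f n e) atTop (𝓝 0) := by
      have := tendsto_finset_sum y hterm
      simpa using this
    simpa using hs.const_mul α
  have hfe : ∀ e ∈ G.edgeSet, e ∉ y → Tendsto (fun n => f n e) atTop (𝓝 (w e)) := by
    intro e he hey
    have h0 : Tendsto (fun n => sigmoid (s n e)) atTop (𝓝 0) :=
      sigmoid_tendsto_atBot.comp (hyBot e he hey)
    have := ((tendsto_const_nhds (x := (1:ℝ))).sub h0).const_mul (w e)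
    simpa [hf] using this
  have hev : ∀ᶠ n in atTop, ∀ e : Sym2 V, e ∈ G.edgeSet → e ∉ y →
      α * ∑ e' ∈ y, f n e' < f n e := by
    rw [Filter.eventually_all]
    intro e
    by_cases he : e ∈ G.edgeSet
    · by_cases hey : e ∈ y
      · filter_upwards with n h1 h2; exact absurd hey h2
      · have := hsum0.eventually_lt (hfe e he hey) (hw e he)
        filter_upwards [this] with n hn _ _ using hn
    · filter_upwards with n h1; exact absurd h1 he
  obtain ⟨N, hN⟩ := eventually_atTop.mp hev
  refine ⟨N, fun n hn y' hy' hle => ?_⟩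
  by_contra hne
  have hsubE : ↑y' ⊆ G.edgeSet := hy'.1
  -- there is an edge of y' not in y
  have hex : ∃ e ∈ y', e ∉ y := by
    by_contra hno
    push_neg at hno
    have hsub : y' ⊆ y := hno
    obtain ⟨e0, he0y, he0y'⟩ : ∃ e0 ∈ y, e0 ∉ y' := by
      by_contra h
      push_neg at h
      exact hne (le_antisymm hsub h)
    have hlt : ∑ e ∈ y', w e < ∑ e ∈ y, w e := by
      refine Finset.sum_lt_sum_of_subset hsub he0y he0y' (hw e0 (hy.1 he0y)) ?_
      intro j hj _
      exact (hw j (hy.1 hj)).le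
    exact absurd (hopt y' hy') (not_le.mpr hlt)
  obtain ⟨e, hey', hey⟩ := hex
  have heE : e ∈ G.edgeSet := hsubE hey'
  have h1 : f n e ≤ ∑ e' ∈ y', f n e' :=
    Finset.single_le_sum (fun j hj => (hposf n j (hsubE hj)).le) hey'
  have h2 : α * ∑ e' ∈ y, f n e' < f n e := hN n hn e heE hey
  have := hle
  simp only [hf] at h1 h2 this
  linarith
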